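/- Let T > 0 and let u : ℝ × [0,T) → ℝ be a classical periodic solution of the Fornberg–Whitham equation such that, in addition, ∂_x² u and ∂_t ∂_x u exist and are continuous on ℝ × [0,T). Let u₀(x) = u(x,0) and suppose min_{x∈[0,1]} u₀'(x) + max_{x∈[0,1]} u₀'(x) < -2/3. Then T ≤ 2 / (-3 min_{x∈[0,1]} u₀'(x) - 1). -/

import Mathlib

open MeasureTheory

/-- The 1-periodic convolution kernel of `(id - ∂ₓ²)⁻¹` on the circle, on `[0,1)`. -/
noncomputable def FWKernel (y : ℝ) : ℝ :=
  (Real.exp y + Real.exp (1 - y)) / (2 * (Real.exp 1 - 1))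

/-- A classical periodic solution of the Fornberg–Whitham equation on `ℝ × [0,T)`:
`u` is 1-periodic in `x`, has continuous partial derivatives `ux = ∂ₓ u` and
`ut = ∂ₜ u` on `ℝ × [0,T)`, and satisfies
`∂ₜ u + (3/2) u ∂ₓ u = ∫_0^1 K(y) ∂ₓ u(x - y, t) dy`. -/
def IsClassicalFWSolution (T : ℝ) (u ux ut : ℝ → ℝ → ℝ) : Prop :=
  ContinuousOn (fun p : ℝ × ℝ => u p.1 p.2) (Set.univ ×ˢ Set.Ico 0 T) ∧
  (∀ x : ℝ, ∀ t ∈ Set.Ico (0 : ℝ) T, u (x + 1) t = u x t) ∧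
  (∀ x : ℝ, ∀ t ∈ Set.Ico (0 : ℝ) T, HasDerivAt (fun x' => u x' t) (ux x t) x) ∧
  (∀ x : ℝ, ∀ t ∈ Set.Ico (0 : ℝ) T,
    HasDerivWithinAt (fun t' => u x t') (ut x t) (Set.Ico 0 T) t) ∧
  ContinuousOn (fun p : ℝ × ℝ => ux p.1 p.2) (Set.univ ×ˢ Set.Ico 0 T) ∧
  ContinuousOn (fun p : ℝ × ℝ => ut p.1 p.2) (Set.univ ×ˢ Set.Ico 0 T) ∧
  (∀ x : ℝ, ∀ t ∈ Set.Ico (0 : ℝ) T,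
    ut x t + (3 / 2) * u x t * ux x t = ∫ y in (0:ℝ)..1, FWKernel y * ux (x - y) t)

/-!
Differentiating the equation in `x` and using `K ⋆ uₓₓ = K ⋆ u - u` (`K` is the Green function
of `1 - ∂ₓ²` on the circle), `v = uₓ` satisfies `vₜ = -(3/2) v² - (3/2) u vₓ + K ⋆ u - u`.
At a point where `v(·, t)` attains its minimum `m(t)` we have `vₓ = 0` and, since
`u(x - y) ≤ u(x) - m y` with `∫ K = 1`, `∫ y K = 1/2`, also `K ⋆ u - u ≤ -m/2`; so `m` has right
Dini derivative at most `-(3/2) m² - m/2`. Then `f = 3m + 1` obeys `f' ≤ (f - f²)/2 < -f²/2`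
while `f < 0`, and comparison with `2 / (t - τ)`, `τ = -2 / f(0)`, drives the continuous
function `f` to `-∞` at `τ`, so `T ≤ τ`. Initially `f(0) < 0` because `max u₀' ≥ 0` by Rolle.
-/

open Set Filter Topology intervalIntegral Function

noncomputable def FWKernelDeriv (y : ℝ) : ℝ :=
  (Real.exp y - Real.exp (1 - y)) / (2 * (Real.exp 1 - 1))

lemma hasDerivAt_exp_one_sub (y : ℝ) :
    HasDerivAt (fun y => Real.exp (1 - y)) (-Real.exp (1 - y)) y := by
  simpa using ((hasDerivAt_id y).const_sub 1).exp

lemma hasDerivAt_FWKernel (y : ℝ) : HasDerivAt FWKernel (FWKernelDeriv y) y := by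
  have h := ((Real.hasDerivAt_exp y).add (hasDerivAt_exp_one_sub y)).div_const
    (2 * (Real.exp 1 - 1))
  rwa [← sub_eq_add_neg] at h

lemma hasDerivAt_FWKernelDeriv (y : ℝ) : HasDerivAt FWKernelDeriv (FWKernel y) y := by
  have h := ((Real.hasDerivAt_exp y).sub (hasDerivAt_exp_one_sub y)).div_const
    (2 * (Real.exp 1 - 1))
  rwa [sub_neg_eq_add] at h

lemma exp_one_sub_one_pos : 0 < Real.exp 1 - 1 := by
  linarith [Real.add_one_lt_exp (one_ne_zero (α := ℝ))]

lemma FWKernel_pos (y : ℝ) : 0 < FWKernel y :=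
  div_pos (by positivity) (mul_pos two_pos exp_one_sub_one_pos)

@[fun_prop]
lemma continuous_FWKernel : Continuous FWKernel := by
  unfold FWKernel
  fun_prop

lemma FWKernel_one : FWKernel 1 = FWKernel 0 := by
  simp only [FWKernel, sub_self, sub_zero, add_comm]

lemma FWKernelDeriv_one : FWKernelDeriv 1 = 1 / 2 := by
  have := exp_one_sub_one_pos
  rw [FWKernelDeriv, sub_self, Real.exp_zero]
  field_simp

lemma FWKernelDeriv_zero : FWKernelDeriv 0 = -(1 / 2) := by
  have := exp_one_sub_one_pos
  rw [FWKernelDeriv, sub_zero, Real.exp_zero]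
  field_simp
  ring

lemma integral_FWKernel : ∫ y in (0:ℝ)..1, FWKernel y = 1 := by
  rw [integral_eq_sub_of_hasDerivAt (fun y _ => hasDerivAt_FWKernelDeriv y)
    (continuous_FWKernel.intervalIntegrable 0 1), FWKernelDeriv_one, FWKernelDeriv_zero]
  norm_num

lemma integral_mul_FWKernel : ∫ y in (0:ℝ)..1, y * FWKernel y = 1 / 2 := by
  have hderiv (y : ℝ) : HasDerivAt (fun y => y * FWKernelDeriv y - FWKernel y)
      (y * FWKernel y) y :=
    (((hasDerivAt_id' y).mul (hasDerivAt_FWKernelDeriv y)).sub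
      (hasDerivAt_FWKernel y)).congr_deriv (by ring)
  rw [integral_eq_sub_of_hasDerivAt (fun y _ => hderiv y)
    ((by fun_prop : Continuous fun y => y * FWKernel y).intervalIntegrable 0 1)]
  simp [FWKernelDeriv_one, FWKernelDeriv_zero, FWKernel_one]

theorem Function.Periodic.of_hasDerivAt {f f' : ℝ → ℝ} {c : ℝ} (hp : Periodic f c)
    (hf : ∀ x, HasDerivAt f (f' x) x) : Periodic f' c := by
  intro x
  have hshift := (hf (x + c)).comp_add_const x c
  rw [show (fun x => f (x + c)) = f from funext hp] at hshift
  exact hshift.unique (hf x)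

theorem Function.Periodic.exists_eq_sInf_image_Icc {f : ℝ → ℝ} (hp : Periodic f 1)
    (hf : Continuous f) : ∃ x₀, f x₀ = sInf (f '' Icc 0 1) ∧ ∀ x, f x₀ ≤ f x := by
  have hrange : f '' Icc 0 1 = range f := by simpa using hp.image_Icc one_pos 0
  have hcpt := hp.compact_of_continuous one_ne_zero hf
  obtain ⟨x₀, hx₀⟩ := hcpt.sInf_mem (range_nonempty f)
  rw [hrange]
  exact ⟨x₀, hx₀, fun x => hx₀ ▸ csInf_le hcpt.bddBelow (mem_range_self x)⟩

theorem Function.Periodic.sSup_image_Icc_nonneg_of_hasDerivAt {f f' : ℝ → ℝ}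
    (hp : Periodic f 1) (hf : ∀ x, HasDerivAt f (f' x) x) (hf' : Continuous f') :
    0 ≤ sSup (f' '' Icc 0 1) := by
  obtain ⟨c, hc, hfc⟩ := exists_hasDerivAt_eq_zero zero_lt_one
    (HasDerivAt.continuousOn fun x _ => hf x) (by simpa using (hp 0).symm) fun x _ => hf x
  have hmem := mem_image_of_mem f' (Ioo_subset_Icc_self hc)
  rw [hfc] at hmem
  exact le_csSup (isCompact_Icc.image hf').bddAbove hmem

section Strip

variable {F : ℝ → ℝ → ℝ} {s : Set ℝ}

theorem continuous_slice_of_continuousOn_univ_prod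
    (hF : ContinuousOn (fun p : ℝ × ℝ => F p.1 p.2) (univ ×ˢ s)) {t : ℝ} (ht : t ∈ s) :
    Continuous (F · t) :=
  hF.comp_continuous (continuous_id.prodMk continuous_const) fun _ => ⟨trivial, ht⟩

theorem continuousOn_slice_of_continuousOn_univ_prod
    (hF : ContinuousOn (fun p : ℝ × ℝ => F p.1 p.2) (univ ×ˢ s)) (x : ℝ) :
    ContinuousOn (F x) s :=
  hF.comp (continuous_const.prodMk continuous_id).continuousOn fun _ ht => ⟨trivial, ht⟩

theorem continuousOn_sInf_image_of_continuousOn_univ_prod {K : Set ℝ} (hK : IsCompact K)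
    (hF : ContinuousOn (fun p : ℝ × ℝ => F p.1 p.2) (univ ×ˢ s)) :
    ContinuousOn (fun t => sInf ((F · t) '' K)) s := by
  rw [continuousOn_iff_continuous_domRestrict]
  exact hK.continuous_sInf (f := fun (t : s) x => F x t) <| hF.comp_continuous
    (by fun_prop : Continuous fun q : s × ℝ => (q.2, (q.1 : ℝ))) fun q => ⟨trivial, q.1.2⟩

end Strip

theorem hasDerivAt_intervalIntegral_of_continuousOn {F F' : ℝ → ℝ → ℝ} {a b : ℝ} (hab : a ≤ b)
    (hF : ContinuousOn (fun p : ℝ × ℝ => F p.1 p.2) (univ ×ˢ Icc a b))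
    (hF' : ContinuousOn (fun p : ℝ × ℝ => F' p.1 p.2) (univ ×ˢ Icc a b))
    (hderiv : ∀ x, ∀ y ∈ Icc a b, HasDerivAt (F · y) (F' x y) x) (x₀ : ℝ) :
    HasDerivAt (fun x => ∫ y in a..b, F x y) (∫ y in a..b, F' x₀ y) x₀ := by
  have hIoc : uIoc a b ⊆ Icc a b := uIoc_subset_uIcc.trans (uIcc_of_le hab).subset
  have hFx := continuousOn_slice_of_continuousOn_univ_prod hF
  have hF'x₀ := continuousOn_slice_of_continuousOn_univ_prod hF' x₀
  obtain ⟨C, hC⟩ := (isCompact_closedBall x₀ 1 |>.prod isCompact_Icc).exists_bound_of_continuousOn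
    (hF'.mono (prod_mono (subset_univ _) le_rfl))
  refine (hasDerivAt_integral_of_dominated_loc_of_deriv_le (bound := fun _ => C)
    (Metric.ball_mem_nhds x₀ one_pos)
    (.of_forall fun x => ((hFx x).mono hIoc).aestronglyMeasurable measurableSet_uIoc)
    ((hFx x₀).intervalIntegrable_of_Icc hab)
    ((hF'x₀.mono hIoc).aestronglyMeasurable measurableSet_uIoc) ?_ intervalIntegrable_const ?_).2
  · exact .of_forall fun y hy x hx => hC (x, y) ⟨Metric.ball_subset_closedBall hx, hIoc hy⟩
  · exact .of_forall fun y hy x _ => hderiv x y (hIoc hy)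

noncomputable def fwConv (f : ℝ → ℝ) (x : ℝ) : ℝ :=
  ∫ y in (0:ℝ)..1, FWKernel y * f (x - y)

theorem hasDerivAt_fwConv {f f' : ℝ → ℝ} (hf : ∀ x, HasDerivAt f (f' x) x) (hf' : Continuous f')
    (x : ℝ) : HasDerivAt (fwConv f) (fwConv f' x) x := by
  have hfc : Continuous f := continuous_iff_continuousAt.2 fun x => (hf x).continuousAt
  refine hasDerivAt_intervalIntegral_of_continuousOn (F := fun x y => FWKernel y * f (x - y))
    (F' := fun x y => FWKernel y * f' (x - y)) zero_le_one
    (by fun_prop : Continuous fun p : ℝ × ℝ => FWKernel p.2 * f (p.1 - p.2)).continuousOn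
    (by fun_prop : Continuous fun p : ℝ × ℝ => FWKernel p.2 * f' (p.1 - p.2)).continuousOn
    (fun x y _ => ?_) x
  simpa using ((hf (x - y)).comp x ((hasDerivAt_id x).sub_const y)).const_mul (FWKernel y)

theorem fwConv_secondDeriv_eq {f f' f'' : ℝ → ℝ} (hp : Periodic f 1)
    (hf : ∀ x, HasDerivAt f (f' x) x) (hf' : ∀ x, HasDerivAt f' (f'' x) x)
    (hf'' : Continuous f'') (x : ℝ) : fwConv f'' x = fwConv f x - f x := by
  have hfc : Continuous f := continuous_iff_continuousAt.2 fun x => (hf x).continuousAt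
  -- integrate by parts twice, using `K'' = K`
  have hderiv (y : ℝ) : HasDerivAt
      (fun y => -(FWKernel y * f' (x - y)) - FWKernelDeriv y * f (x - y))
      (FWKernel y * f'' (x - y) - FWKernel y * f (x - y)) y := by
    have hsub : HasDerivAt (fun y => x - y) (-1) y := by simpa using (hasDerivAt_id y).const_sub x
    exact (((hasDerivAt_FWKernel y).mul ((hf' (x - y)).comp y hsub)).neg.sub
      ((hasDerivAt_FWKernelDeriv y).mul ((hf (x - y)).comp y hsub))).congr_deriv
      (by simp only [Function.comp_def]; ring)
  have hint := integral_eq_sub_of_hasDerivAt (fun y _ => hderiv y)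
    ((by fun_prop : Continuous fun y => FWKernel y * f'' (x - y) - FWKernel y * f (x - y))
      |>.intervalIntegrable 0 1)
  rw [integral_sub ((by fun_prop : Continuous fun y => FWKernel y * f'' (x - y))
    |>.intervalIntegrable 0 1) ((by fun_prop : Continuous fun y => FWKernel y * f (x - y))
    |>.intervalIntegrable 0 1)] at hint
  simp only [sub_zero, FWKernel_one, FWKernelDeriv_one, FWKernelDeriv_zero,
    hp.sub_eq x, (hp.of_hasDerivAt hf).sub_eq x] at hint
  unfold fwConv
  linarith

theorem fwConv_sub_le {f f' : ℝ → ℝ} {c : ℝ} (hf : ∀ x, HasDerivAt f (f' x) x)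
    (hc : ∀ x, c ≤ f' x) (x : ℝ) : fwConv f x - f x ≤ -(c / 2) := by
  have hfc : Continuous f := continuous_iff_continuousAt.2 fun x => (hf x).continuousAt
  have hmvt (y : ℝ) (hy : 0 ≤ y) : f (x - y) ≤ f x - c * y := by
    have := mul_sub_le_image_sub_of_le_deriv (fun x => (hf x).differentiableAt)
      (fun z => (hf z).deriv ▸ hc z) (by linarith : x - y ≤ x)
    linarith
  have hle : fwConv f x ≤ ∫ y in (0:ℝ)..1, (FWKernel y * f x - c * (y * FWKernel y)) := by
    refine integral_mono_on zero_le_one ((by fun_prop : Continuous fun y => FWKernel y * f (x - y))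
      |>.intervalIntegrable 0 1) ((by fun_prop : Continuous fun y =>
        FWKernel y * f x - c * (y * FWKernel y)).intervalIntegrable 0 1) fun y hy => ?_
    nlinarith [hmvt y hy.1, FWKernel_pos y]
  rw [integral_sub ((by fun_prop : Continuous fun y => FWKernel y * f x).intervalIntegrable 0 1)
    ((by fun_prop : Continuous fun y => c * (y * FWKernel y)).intervalIntegrable 0 1),
    intervalIntegral.integral_mul_const, intervalIntegral.integral_const_mul, integral_FWKernel,
    integral_mul_FWKernel] at hle
  linarith

theorem continuousOn_fwConv_of_continuousOn_univ_prod {F : ℝ → ℝ → ℝ} {s : Set ℝ}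
    (hF : ContinuousOn (fun p : ℝ × ℝ => F p.1 p.2) (univ ×ˢ s)) :
    ContinuousOn (fun p : ℝ × ℝ => fwConv (F · p.2) p.1) (univ ×ˢ s) := by
  rw [continuousOn_iff_continuous_domRestrict]
  refine continuous_parametric_intervalIntegral_of_continuous'
    (f := fun (p : ↥(univ ×ˢ s)) y => FWKernel y * F (p.val.1 - y) p.val.2) ?_ 0 1
  exact (continuous_FWKernel.comp continuous_snd).mul <| hF.comp_continuous
    (by fun_prop : Continuous fun q : ↥(univ ×ˢ s) × ℝ => (q.1.val.1 - q.2, q.1.val.2))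
    fun q => ⟨trivial, q.1.2.2⟩

theorem frequently_slope_lt_of_le_of_hasDerivWithinAt {m g : ℝ → ℝ} {t g' r : ℝ}
    (hle : ∀ᶠ z in 𝓝[>] t, m z ≤ g z) (heq : m t = g t)
    (hg : HasDerivWithinAt g g' (Ici t) t) (hr : g' < r) : ∃ᶠ z in 𝓝[>] t, slope m t z < r := by
  refine ((hg.Ioi_of_Ici.limsup_slope_le' (lt_irrefl t) hr).and
    (hle.and self_mem_nhdsWithin)).frequently.mono ?_
  rintro z ⟨hgz, hmz, hz⟩
  refine lt_of_le_of_lt ?_ hgz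
  rw [slope_def_field, slope_def_field]
  exact div_le_div_of_nonneg_right (by linarith) (sub_nonneg.2 (le_of_lt hz))

theorem le_two_div_sub_of_riccati_slope {f : ℝ → ℝ} {τ b : ℝ} (hb : b < τ)
    (hf : ContinuousOn f (Icc 0 b)) (hf0 : f 0 ≤ 2 / (0 - τ))
    (hslope : ∀ t ∈ Ico 0 b, ∀ r, (f t - f t ^ 2) / 2 < r → ∃ᶠ z in 𝓝[>] t, slope f t z < r) :
    ∀ ⦃t⦄, t ∈ Icc 0 b → f t ≤ 2 / (t - τ) := by
  have hneg {t : ℝ} (ht : t ≤ b) : t - τ < 0 := by linarith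
  refine image_le_of_liminf_slope_right_lt_deriv_boundary' hf hslope hf0
    (B' := fun t => -(2 / (t - τ)) ^ 2 / 2)
    (continuousOn_const.div (by fun_prop) fun t ht => (hneg ht.2).ne) (fun t ht => ?_)
    fun t ht hft => ?_
  · refine ((hasDerivAt_const t 2).div ((hasDerivAt_id' t).sub_const τ)
      (hneg ht.2.le).ne).hasDerivWithinAt.congr_deriv ?_
    field_simp [(hneg ht.2.le).ne]
    ring
  · have hB : 2 / (t - τ) < 0 := div_neg_of_pos_of_neg two_pos (hneg ht.2.le)
    rw [hft]
    linarith

theorem le_neg_two_div_of_riccati_slope {f : ℝ → ℝ} {T : ℝ} (hf : ContinuousOn f (Ico 0 T))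
    (hf0 : f 0 < 0)
    (hslope : ∀ t ∈ Ico 0 T, ∀ r, (f t - f t ^ 2) / 2 < r → ∃ᶠ z in 𝓝[>] t, slope f t z < r) :
    T ≤ -2 / f 0 := by
  by_contra! hT
  set τ := -2 / f 0 with hτ_def
  have hτ : 0 < τ := div_pos_of_neg_of_neg (by norm_num) hf0
  have hτ0 : 2 / (0 - τ) = f 0 := by
    have := hf0.ne
    rw [hτ_def, zero_sub, neg_div, neg_neg]
    field_simp
  obtain ⟨c, hc⟩ := isCompact_Icc.bddBelow_image (hf.mono (Icc_subset_Ico_right hT))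
  have hlim : Tendsto (fun t => 2 / (t - τ)) (𝓝[<] τ) atBot := by
    refine Tendsto.const_mul_atBot two_pos (tendsto_inv_nhdsLT_zero.comp ?_)
    refine tendsto_nhdsWithin_of_tendsto_nhds_of_eventually_within _ ?_ ?_
    · exact ((continuous_sub_right τ).tendsto' τ 0 (sub_self τ)).mono_left nhdsWithin_le_nhds
    · filter_upwards [self_mem_nhdsWithin] with t ht
      exact mem_Iio.2 (sub_neg.2 ht)
  obtain ⟨t, hlt, ht⟩ := ((hlim.eventually_lt_atBot c).and (Ico_mem_nhdsLT hτ)).exists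
  have hle := le_two_div_sub_of_riccati_slope ht.2
    (hf.mono (Icc_subset_Ico_right (ht.2.trans hT))) hτ0.ge
    (fun s hs => hslope s ⟨hs.1, hs.2.trans (ht.2.trans hT)⟩) ⟨ht.1, le_rfl⟩
  have hct : c ≤ f t := hc ⟨t, Ico_subset_Icc_self ht, rfl⟩
  linarith

/-- `∂ₓ` of the right-hand side `K ⋆ uₓ - (3/2) u uₓ` of the equation,
simplified by `K ⋆ uₓₓ = K ⋆ u - u`. -/
noncomputable def fwRhsDx (u ux uxx : ℝ → ℝ → ℝ) (x t : ℝ) : ℝ :=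
  -(3 / 2) * ux x t ^ 2 - (3 / 2) * u x t * uxx x t + (fwConv (u · t) x - u x t)

namespace IsClassicalFWSolution

variable {T : ℝ} {u ux ut uxx : ℝ → ℝ → ℝ}

theorem periodic (hu : IsClassicalFWSolution T u ux ut) {t : ℝ} (ht : t ∈ Ico 0 T) :
    Periodic (u · t) 1 :=
  fun x => hu.2.1 x t ht

theorem hasDerivAt_u (hu : IsClassicalFWSolution T u ux ut) {t : ℝ} (ht : t ∈ Ico 0 T)
    (x : ℝ) : HasDerivAt (u · t) (ux x t) x :=
  hu.2.2.1 x t ht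

theorem continuous_ux (hu : IsClassicalFWSolution T u ux ut) {t : ℝ} (ht : t ∈ Ico 0 T) :
    Continuous (ux · t) :=
  continuous_slice_of_continuousOn_univ_prod hu.2.2.2.2.1 ht

theorem continuousOn_sInf_ux (hu : IsClassicalFWSolution T u ux ut) :
    ContinuousOn (fun t => sInf ((ux · t) '' Icc 0 1)) (Ico 0 T) :=
  continuousOn_sInf_image_of_continuousOn_univ_prod isCompact_Icc hu.2.2.2.2.1

theorem hasDerivAt_ut (hu : IsClassicalFWSolution T u ux ut)
    (huxx : ∀ x : ℝ, ∀ t ∈ Ico (0 : ℝ) T, HasDerivAt (fun x' => ux x' t) (uxx x t) x)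
    (huxxc : ContinuousOn (fun p : ℝ × ℝ => uxx p.1 p.2) (univ ×ˢ Ico 0 T))
    {t : ℝ} (ht : t ∈ Ico 0 T) (x : ℝ) : HasDerivAt (ut · t) (fwRhsDx u ux uxx x t) x := by
  have huxxt := continuous_slice_of_continuousOn_univ_prod huxxc ht
  have hconv := hasDerivAt_fwConv (huxx · t ht) huxxt x
  rw [fwConv_secondDeriv_eq (hu.periodic ht) (hu.hasDerivAt_u ht) (huxx · t ht) huxxt x] at hconv
  have hut : (ut · t) = fun x => fwConv (ux · t) x - 3 / 2 * u x t * ux x t :=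
    funext fun x => eq_sub_of_add_eq (hu.2.2.2.2.2.2 x t ht)
  rw [hut]
  exact (hconv.sub (((hu.hasDerivAt_u ht x).const_mul (3 / 2)).mul (huxx x t ht))).congr_deriv
    (by unfold fwRhsDx; ring)

theorem continuousOn_fwRhsDx (hu : IsClassicalFWSolution T u ux ut)
    (huxxc : ContinuousOn (fun p : ℝ × ℝ => uxx p.1 p.2) (univ ×ˢ Ico 0 T)) :
    ContinuousOn (fun p : ℝ × ℝ => fwRhsDx u ux uxx p.1 p.2) (univ ×ˢ Ico 0 T) := by
  obtain ⟨huc, -, -, -, huxc, -, -⟩ := hu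
  have hconv := continuousOn_fwConv_of_continuousOn_univ_prod huc
  unfold fwRhsDx
  fun_prop

theorem ux_sub_ux_eq_integral (hu : IsClassicalFWSolution T u ux ut)
    (huxx : ∀ x : ℝ, ∀ t ∈ Ico (0 : ℝ) T, HasDerivAt (fun x' => ux x' t) (uxx x t) x)
    (huxxc : ContinuousOn (fun p : ℝ × ℝ => uxx p.1 p.2) (univ ×ˢ Ico 0 T))
    {s₁ s₂ : ℝ} (hs₁ : 0 ≤ s₁) (h12 : s₁ ≤ s₂) (hs₂ : s₂ < T) (x : ℝ) :
    ux x s₂ - ux x s₁ = ∫ τ in s₁..s₂, fwRhsDx u ux uxx x τ := by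
  have hsub : Icc s₁ s₂ ⊆ Ico 0 T := Icc_subset_Ico hs₁ hs₂
  have hstrip : (univ : Set ℝ) ×ˢ Icc s₁ s₂ ⊆ univ ×ˢ Ico 0 T := prod_mono subset_rfl hsub
  have ⟨huc, _, _, hut, _, hutc, _⟩ := hu
  -- `∂ₜ uₓ = ∂ₓ uₜ` in integrated form: differentiate `u(·, s₂) - u(·, s₁) = ∫ uₜ` in `x`
  have hftc (x' : ℝ) : ∫ τ in s₁..s₂, ut x' τ = u x' s₂ - u x' s₁ :=
    integral_eq_sub_of_hasDeriv_right_of_le h12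
      ((continuousOn_slice_of_continuousOn_univ_prod huc x').mono hsub)
      (fun τ hτ => (hut x' τ (hsub (Ioo_subset_Icc_self hτ))).mono_of_mem_nhdsWithin
        (Ico_mem_nhdsGT_of_mem (hsub (Ioo_subset_Icc_self hτ))))
      (((continuousOn_slice_of_continuousOn_univ_prod hutc x').mono hsub).intervalIntegrable_of_Icc
        h12)
  have hderiv := hasDerivAt_intervalIntegral_of_continuousOn h12 (hutc.mono hstrip)
    ((continuousOn_fwRhsDx hu huxxc).mono hstrip)
    (fun x' τ hτ => hasDerivAt_ut hu huxx huxxc (hsub hτ) x') x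
  simp only [hftc] at hderiv
  exact ((hu.hasDerivAt_u (hsub ⟨h12, le_rfl⟩) x).sub
    (hu.hasDerivAt_u (hsub ⟨le_rfl, h12⟩) x)).unique hderiv

theorem hasDerivWithinAt_ux (hu : IsClassicalFWSolution T u ux ut)
    (huxx : ∀ x : ℝ, ∀ t ∈ Ico (0 : ℝ) T, HasDerivAt (fun x' => ux x' t) (uxx x t) x)
    (huxxc : ContinuousOn (fun p : ℝ × ℝ => uxx p.1 p.2) (univ ×ˢ Ico 0 T))
    {t : ℝ} (ht : t ∈ Ico 0 T) (x : ℝ) :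
    HasDerivWithinAt (ux x ·) (fwRhsDx u ux uxx x t) (Ici t) t := by
  have hv := continuousOn_slice_of_continuousOn_univ_prod (continuousOn_fwRhsDx hu huxxc) x
  have hftc : HasDerivWithinAt (fun s => ux x t + ∫ τ in t..s, fwRhsDx u ux uxx x τ)
      (fwRhsDx u ux uxx x t) (Ici t) t :=
    (integral_hasDerivWithinAt_right IntervalIntegrable.refl
      ⟨Ioo t T, Ioo_mem_nhdsGT ht.2, (hv.mono fun τ hτ => ⟨ht.1.trans hτ.1.le, hτ.2⟩)
        |>.aestronglyMeasurable measurableSet_Ioo⟩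
      ((hv t ht).mono_of_mem_nhdsWithin (Ico_mem_nhdsGT_of_mem ht))).const_add _
  refine hftc.congr_of_eventuallyEq ?_ (by simp)
  filter_upwards [Ico_mem_nhdsGE ht.2] with s hs
  rw [← ux_sub_ux_eq_integral hu huxx huxxc ht.1 hs.1 hs.2]
  ring

theorem frequently_slope_sInf_ux_lt (hu : IsClassicalFWSolution T u ux ut)
    (huxx : ∀ x : ℝ, ∀ t ∈ Ico (0 : ℝ) T, HasDerivAt (fun x' => ux x' t) (uxx x t) x)
    (huxxc : ContinuousOn (fun p : ℝ × ℝ => uxx p.1 p.2) (univ ×ˢ Ico 0 T))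
    {t : ℝ} (ht : t ∈ Ico 0 T) {r : ℝ}
    (hr : -(3 / 2) * sInf ((ux · t) '' Icc 0 1) ^ 2 - sInf ((ux · t) '' Icc 0 1) / 2 < r) :
    ∃ᶠ z in 𝓝[>] t, slope (fun s => sInf ((ux · s) '' Icc 0 1)) t z < r := by
  have hmin {s : ℝ} (hs : s ∈ Ico 0 T) :=
    (hu.periodic hs).of_hasDerivAt (hu.hasDerivAt_u hs) |>.exists_eq_sInf_image_Icc
      (hu.continuous_ux hs)
  obtain ⟨x₀, hx₀, hx₀_min⟩ := hmin ht
  have huxx₀ : uxx x₀ t = 0 := IsLocalMin.hasDerivAt_eq_zero (.of_forall hx₀_min) (huxx x₀ t ht)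
  have hv : fwRhsDx u ux uxx x₀ t ≤ -(3 / 2) * ux x₀ t ^ 2 - ux x₀ t / 2 := by
    have := fwConv_sub_le (hu.hasDerivAt_u ht) hx₀_min x₀
    unfold fwRhsDx
    rw [huxx₀]
    linarith
  rw [← hx₀] at hr
  refine frequently_slope_lt_of_le_of_hasDerivWithinAt (g := (ux x₀ ·)) ?_ hx₀.symm
    (hu.hasDerivWithinAt_ux huxx huxxc ht x₀) (hv.trans_lt hr)
  filter_upwards [Ioo_mem_nhdsGT ht.2] with s hs
  obtain ⟨x₁, hx₁, hx₁_min⟩ := hmin ⟨ht.1.trans hs.1.le, hs.2⟩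
  exact hx₁ ▸ hx₁_min x₀

end IsClassicalFWSolution

theorem fw_blowup_general (T : ℝ) (hT : 0 < T) (u ux ut uxx : ℝ → ℝ → ℝ)
    (hu : IsClassicalFWSolution T u ux ut)
    (huxx : ∀ x : ℝ, ∀ t ∈ Set.Ico (0 : ℝ) T,
      HasDerivAt (fun x' => ux x' t) (uxx x t) x)
    (huxxc : ContinuousOn (fun p : ℝ × ℝ => uxx p.1 p.2) (Set.univ ×ˢ Set.Ico 0 T))
    (hinit : sInf ((fun x => ux x 0) '' Set.Icc (0 : ℝ) 1)
        + sSup ((fun x => ux x 0) '' Set.Icc (0 : ℝ) 1) < -(2 / 3)) :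
    T ≤ 2 / (-3 * sInf ((fun x => ux x 0) '' Set.Icc (0 : ℝ) 1) - 1) := by
  have h0 : (0 : ℝ) ∈ Ico 0 T := ⟨le_rfl, hT⟩
  have hmax : 0 ≤ sSup ((ux · 0) '' Icc 0 1) :=
    (hu.periodic h0).sSup_image_Icc_nonneg_of_hasDerivAt (hu.hasDerivAt_u h0) (hu.continuous_ux h0)
  have hslope (t : ℝ) (ht : t ∈ Ico 0 T) (r : ℝ)
      (hr : (3 * sInf ((ux · t) '' Icc 0 1) + 1 - (3 * sInf ((ux · t) '' Icc 0 1) + 1) ^ 2) / 2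
        < r) :
      ∃ᶠ z in 𝓝[>] t, slope (fun s => 3 * sInf ((ux · s) '' Icc 0 1) + 1) t z < r := by
    refine (hu.frequently_slope_sInf_ux_lt huxx huxxc ht (r := r / 3) (by linarith)).mono
      fun z hz => ?_
    rw [slope_def_field] at hz ⊢
    rw [show ∀ a b : ℝ, (3 * a + 1 - (3 * b + 1)) / (z - t) = 3 * ((a - b) / (z - t)) by
      intro a b; ring]
    linarith
  have hblow := le_neg_two_div_of_riccati_slope (f := fun t => 3 * sInf ((ux · t) '' Icc 0 1) + 1)
    ((hu.continuousOn_sInf_ux.const_mul 3).add continuousOn_const) (by linarith) hslope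
  rwa [show -3 * sInf ((ux · 0) '' Icc 0 1) - 1 = -(3 * sInf ((ux · 0) '' Icc 0 1) + 1) by ring,
    div_neg, ← neg_div]

/-- Blow-up for the periodic Fornberg–Whitham equation: if
`min u₀' + max u₀' < -2/3` then the life span satisfies
`T ≤ 2 / (-3 min u₀' - 1)`. -/
theorem fw_blowup (T : ℝ) (hT : 0 < T) (u ux ut uxx utx : ℝ → ℝ → ℝ)
    (hu : IsClassicalFWSolution T u ux ut)
    (huxx : ∀ x : ℝ, ∀ t ∈ Set.Ico (0 : ℝ) T,
      HasDerivAt (fun x' => ux x' t) (uxx x t) x)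
    (hutx : ∀ x : ℝ, ∀ t ∈ Set.Ico (0 : ℝ) T,
      HasDerivWithinAt (fun t' => ux x t') (utx x t) (Set.Ico 0 T) t)
    (huxxc : ContinuousOn (fun p : ℝ × ℝ => uxx p.1 p.2) (Set.univ ×ˢ Set.Ico 0 T))
    (hutxc : ContinuousOn (fun p : ℝ × ℝ => utx p.1 p.2) (Set.univ ×ˢ Set.Ico 0 T))
    (hinit : sInf ((fun x => ux x 0) '' Set.Icc (0 : ℝ) 1)
        + sSup ((fun x => ux x 0) '' Set.Icc (0 : ℝ) 1) < -(2 / 3)) :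
    T ≤ 2 / (-3 * sInf ((fun x => ux x 0) '' Set.Icc (0 : ℝ) 1) - 1) :=
  fw_blowup_general T hT u ux ut uxx hu huxx huxxc hinit
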